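/- arXiv:2407.09167 — 2 statements merged into one kernel-verified Lean document; each statement's English description precedes it below -/
import Mathlib

section
/- (SE(3)-bi-equivariance of Arun's method, Proposition 1 part 1.) Let N ≥ 1 and X, Y : Fin N → ℝ³ be point clouds, let r₁, r₂ ∈ SO(3), t₁, t₂ ∈ ℝ³, and set (g₁X) i = r₁(X i) + t₁, (g₂Y) i = r₂(Y i) + t₂. Suppose R(X,Y) = U Σ Vᵀ and R(g₁X, g₂Y) = U' Σ V'ᵀ are O(3)-SVDs with the same Σ = diag(σ₁,σ₂,σ₃), σ₁ ≥ σ₂ > σ₃ ≥ 0. Let r = Proj(U,V), t = m(Y) − r·m(X) and r' = Proj(U',V'), t' = m(g₂Y) − r'·m(g₁X). Then r' = r₂ r r₁ᵀ and t' = r₂ t − r₂ r r₁ᵀ t₁ + t₂. -/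
open Matrix

/-- The mean of a point cloud `X : Fin N → ℝ³`. -/
noncomputable def pcMean {N : ℕ} (X : Fin N → Fin 3 → ℝ) : Fin 3 → ℝ :=
  (N : ℝ)⁻¹ • ∑ i, X i

/-- The correlation matrix `R(X,Y) = ∑ i, (Y i − m(Y)) (X i − m(X))ᵀ`. -/
noncomputable def corrMat {N : ℕ} (X Y : Fin N → Fin 3 → ℝ) : Matrix (Fin 3) (Fin 3) ℝ :=
  ∑ i, vecMulVec (Y i - pcMean Y) (X i - pcMean X)

/-- `U` is a 3×3 real orthogonal matrix (an element of O(3)). -/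
def IsOrtho3 (U : Matrix (Fin 3) (Fin 3) ℝ) : Prop := Uᵀ * U = 1

/-- `r` is an element of SO(3): orthogonal with determinant 1. -/
def IsSO3 (r : Matrix (Fin 3) (Fin 3) ℝ) : Prop := rᵀ * r = 1 ∧ r.det = 1

/-- The sign-corrected SVD projection `Proj(U,V) = U · diag(1,1, det(U Vᵀ)) · Vᵀ`. -/
noncomputable def svdProj (U V : Matrix (Fin 3) (Fin 3) ℝ) : Matrix (Fin 3) (Fin 3) ℝ :=
  U * diagonal ![1, 1, (U * Vᵀ).det] * Vᵀ

lemma offdiag_zero {x c d : ℝ} (h : x * c = d * x) (hne : c ≠ d) : x = 0 := by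
  have h0 : x * (c - d) = 0 := by ring_nf; linarith [h]
  rcases mul_eq_zero.mp h0 with h1 | h1
  · exact h1
  · exact absurd (by linarith) hne

lemma isOrtho3_mul {A B : Matrix (Fin 3) (Fin 3) ℝ} (hA : Aᵀ * A = 1) (hB : Bᵀ * B = 1) :
    IsOrtho3 (A * B) := by
  show (A * B)ᵀ * (A * B) = 1
  rw [Matrix.transpose_mul, Matrix.mul_assoc, ← Matrix.mul_assoc Aᵀ, hA, Matrix.one_mul, hB]

lemma pcMean_transform {N : ℕ} (hN : 1 ≤ N) (X : Fin N → Fin 3 → ℝ)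
    (r : Matrix (Fin 3) (Fin 3) ℝ) (t : Fin 3 → ℝ) :
    pcMean (fun i => r.mulVec (X i) + t) = r.mulVec (pcMean X) + t := by
  have hN' : (N : ℝ) ≠ 0 := by positivity
  unfold pcMean
  rw [Finset.sum_add_distrib, Finset.sum_const, Finset.card_univ, Fintype.card_fin]
  have h1 : ∑ x : Fin N, r *ᵥ X x = r *ᵥ ∑ i, X i := by
    ext j
    simp only [Finset.sum_apply, Matrix.mulVec, dotProduct, Finset.mul_sum]
    rw [Finset.sum_comm]
  rw [smul_add, h1, Matrix.mulVec_smul, ← Nat.cast_smul_eq_nsmul ℝ, smul_smul,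
    inv_mul_cancel₀ hN', one_smul]

lemma corr_transform {N : ℕ} (hN : 1 ≤ N) (X Y : Fin N → Fin 3 → ℝ)
    (r₁ r₂ : Matrix (Fin 3) (Fin 3) ℝ) (t₁ t₂ : Fin 3 → ℝ) :
    corrMat (fun i => r₁.mulVec (X i) + t₁) (fun i => r₂.mulVec (Y i) + t₂)
      = r₂ * corrMat X Y * r₁ᵀ := by
  unfold corrMat
  rw [pcMean_transform hN X r₁ t₁, pcMean_transform hN Y r₂ t₂]
  rw [Finset.mul_sum, Finset.sum_mul]
  refine Finset.sum_congr rfl fun i _ => ?_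
  have h1 : (r₂.mulVec (Y i) + t₂) - (r₂.mulVec (pcMean Y) + t₂) = r₂.mulVec (Y i - pcMean Y) := by
    rw [Matrix.mulVec_sub]; abel
  have h2 : (r₁.mulVec (X i) + t₁) - (r₁.mulVec (pcMean X) + t₁) = r₁.mulVec (X i - pcMean X) := by
    rw [Matrix.mulVec_sub]; abel
  show vecMulVec (r₂.mulVec (Y i) + t₂ - (r₂.mulVec (pcMean Y) + t₂))
    (r₁.mulVec (X i) + t₁ - (r₁.mulVec (pcMean X) + t₁)) = _
  rw [h1, h2]
  ext a b
  simp only [vecMulVec_apply, Matrix.mul_apply, Matrix.mulVec, dotProduct,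
    Matrix.transpose_apply, Finset.sum_mul, Finset.mul_sum]
  refine Finset.sum_congr rfl fun k _ => ?_
  refine Finset.sum_congr rfl fun l _ => ?_
  ring

set_option maxHeartbeats 2000000 in
lemma svdProj_unique (U V U' V' : Matrix (Fin 3) (Fin 3) ℝ)
    (hU : IsOrtho3 U) (hV : IsOrtho3 V) (hU' : IsOrtho3 U') (hV' : IsOrtho3 V')
    (σ₁ σ₂ σ₃ : ℝ) (h12 : σ₁ ≥ σ₂) (h23 : σ₂ > σ₃) (h3 : σ₃ ≥ 0)
    (h : U * diagonal ![σ₁, σ₂, σ₃] * Vᵀ = U' * diagonal ![σ₁, σ₂, σ₃] * V'ᵀ) :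
    svdProj U V = svdProj U' V' := by
  have hUo : U * Uᵀ = 1 := mul_eq_one_comm.mp hU
  have hVo : V * Vᵀ = 1 := mul_eq_one_comm.mp hV
  have hU'o : U' * U'ᵀ = 1 := mul_eq_one_comm.mp hU'
  have hV'o : V' * V'ᵀ = 1 := mul_eq_one_comm.mp hV'
  set D : Matrix (Fin 3) (Fin 3) ℝ := diagonal ![σ₁, σ₂, σ₃] with hDdef
  set W : Matrix (Fin 3) (Fin 3) ℝ := U'ᵀ * U with hWdef
  set Z : Matrix (Fin 3) (Fin 3) ℝ := V'ᵀ * V with hZdef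
  clear_value D W Z
  have hDs : Dᵀ = D := by rw [hDdef]; exact Matrix.diagonal_transpose _
  have hWo : W * Wᵀ = 1 := by
    rw [hWdef, Matrix.transpose_mul, Matrix.transpose_transpose, Matrix.mul_assoc,
      ← Matrix.mul_assoc U, hUo, Matrix.one_mul, hU']
  have hWo' : Wᵀ * W = 1 := mul_eq_one_comm.mp hWo
  have hZo : Z * Zᵀ = 1 := by
    rw [hZdef, Matrix.transpose_mul, Matrix.transpose_transpose, Matrix.mul_assoc,
      ← Matrix.mul_assoc V, hVo, Matrix.one_mul, hV']
  have hZo' : Zᵀ * Z = 1 := mul_eq_one_comm.mp hZo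
  have key : W * D * Zᵀ = D := by
    have h2 := congrArg (fun M => U'ᵀ * M * V') h
    simp only [← Matrix.mul_assoc] at h2
    rw [hWdef, hZdef, Matrix.transpose_mul, Matrix.transpose_transpose]
    simp only [← Matrix.mul_assoc]
    rw [h2, Matrix.mul_assoc _ V'ᵀ V', hV', Matrix.mul_one, hU', Matrix.one_mul]
  have hWD : W * D = D * Z := by
    calc W * D = W * D * (Zᵀ * Z) := by rw [hZo', Matrix.mul_one]
    _ = (W * D * Zᵀ) * Z := by simp only [Matrix.mul_assoc]
    _ = D * Z := by rw [key]
  have keyW : W * (D * D) = (D * D) * W := by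
    have e1 : (W * D * Zᵀ) * (W * D * Zᵀ)ᵀ = D * Dᵀ := by rw [key]
    simp only [Matrix.transpose_mul, Matrix.transpose_transpose, hDs] at e1
    simp only [← Matrix.mul_assoc] at e1
    rw [Matrix.mul_assoc (W*D) Zᵀ Z, hZo', Matrix.mul_one] at e1
    have e2 : W * D * D * Wᵀ * W = D * D * W := by rw [e1]
    rw [Matrix.mul_assoc (W*D*D), hWo', Matrix.mul_one] at e2
    rw [← Matrix.mul_assoc]; exact e2
  have keyZ : Z * (D * D) = (D * D) * Z := by
    have e1 : (W * D * Zᵀ)ᵀ * (W * D * Zᵀ) = Dᵀ * D := by rw [key]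
    simp only [Matrix.transpose_mul, Matrix.transpose_transpose, hDs] at e1
    simp only [← Matrix.mul_assoc] at e1
    rw [Matrix.mul_assoc (Z*D) Wᵀ W, hWo', Matrix.mul_one] at e1
    have e2 : Z * D * D * Zᵀ * Z = D * D * Z := by rw [e1]
    rw [Matrix.mul_assoc (Z*D*D), hZo', Matrix.mul_one] at e2
    rw [← Matrix.mul_assoc]; exact e2
  have hs1 : 0 < σ₁ := by linarith
  have hs2 : 0 < σ₂ := by linarith
  have hDD : D * D = diagonal (![σ₁,σ₂,σ₃] * ![σ₁,σ₂,σ₃]) := by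
    rw [hDdef]; exact Matrix.diagonal_mul_diagonal _ _
  rw [hDD] at keyW keyZ
  rw [hDdef] at hWD
  -- zero entries of W and Z
  have w02 : W 0 2 = 0 := by
    have e := congrFun (congrFun keyW 0) 2
    simp [Matrix.mul_diagonal, Matrix.diagonal_mul] at e
    exact offdiag_zero e (by nlinarith)
  have w20 : W 2 0 = 0 := by
    have e := congrFun (congrFun keyW 2) 0
    simp [Matrix.mul_diagonal, Matrix.diagonal_mul] at e
    exact offdiag_zero e (by nlinarith)
  have w12 : W 1 2 = 0 := by
    have e := congrFun (congrFun keyW 1) 2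
    simp [Matrix.mul_diagonal, Matrix.diagonal_mul] at e
    exact offdiag_zero e (by nlinarith)
  have w21 : W 2 1 = 0 := by
    have e := congrFun (congrFun keyW 2) 1
    simp [Matrix.mul_diagonal, Matrix.diagonal_mul] at e
    exact offdiag_zero e (by nlinarith)
  have z02 : Z 0 2 = 0 := by
    have e := congrFun (congrFun keyZ 0) 2
    simp [Matrix.mul_diagonal, Matrix.diagonal_mul] at e
    exact offdiag_zero e (by nlinarith)
  have z20 : Z 2 0 = 0 := by
    have e := congrFun (congrFun keyZ 2) 0
    simp [Matrix.mul_diagonal, Matrix.diagonal_mul] at e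
    exact offdiag_zero e (by nlinarith)
  have z12 : Z 1 2 = 0 := by
    have e := congrFun (congrFun keyZ 1) 2
    simp [Matrix.mul_diagonal, Matrix.diagonal_mul] at e
    exact offdiag_zero e (by nlinarith)
  have z21 : Z 2 1 = 0 := by
    have e := congrFun (congrFun keyZ 2) 1
    simp [Matrix.mul_diagonal, Matrix.diagonal_mul] at e
    exact offdiag_zero e (by nlinarith)
  -- Z agrees with W on rows 0 and 1
  have z00W : Z 0 0 = W 0 0 := by
    have f := congrFun (congrFun hWD 0) 0
    simp [Matrix.mul_diagonal, Matrix.diagonal_mul] at f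
    apply mul_left_cancel₀ hs1.ne'
    linarith [f]
  have z11W : Z 1 1 = W 1 1 := by
    have f := congrFun (congrFun hWD 1) 1
    simp [Matrix.mul_diagonal, Matrix.diagonal_mul] at f
    apply mul_left_cancel₀ hs2.ne'
    linarith [f]
  have z01W : Z 0 1 = W 0 1 := by
    have e := congrFun (congrFun keyW 0) 1
    simp [Matrix.mul_diagonal, Matrix.diagonal_mul] at e
    have f := congrFun (congrFun hWD 0) 1
    simp [Matrix.mul_diagonal, Matrix.diagonal_mul] at f
    have c : W 0 1 * σ₂ = σ₁ * W 0 1 := by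
      rcases lt_or_eq_of_le h12 with hc | hc
      · have : W 0 1 = 0 := offdiag_zero e (by nlinarith)
        rw [this]; ring
      · rw [hc]; ring
    apply mul_left_cancel₀ hs1.ne'
    linarith [f, c]
  have z10W : Z 1 0 = W 1 0 := by
    have e := congrFun (congrFun keyW 1) 0
    simp [Matrix.mul_diagonal, Matrix.diagonal_mul] at e
    have f := congrFun (congrFun hWD 1) 0
    simp [Matrix.mul_diagonal, Matrix.diagonal_mul] at f
    have c : W 1 0 * σ₁ = σ₂ * W 1 0 := by
      rcases lt_or_eq_of_le h12 with hc | hc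
      · have : W 1 0 = 0 := offdiag_zero e (by nlinarith)
        rw [this]; ring
      · rw [hc]; ring
    apply mul_left_cancel₀ hs2.ne'
    linarith [f, c]
  -- orthogonality entries
  have o00 := congrFun (congrFun hWo 0) 0
  have o01 := congrFun (congrFun hWo 0) 1
  have o10 := congrFun (congrFun hWo 1) 0
  have o11 := congrFun (congrFun hWo 1) 1
  simp [Matrix.mul_apply, Fin.sum_univ_three, Matrix.one_apply, w02, w12] at o00 o01 o10 o11
  have sW : W 2 2 * W 2 2 = 1 := by
    have o := congrFun (congrFun hWo 2) 2
    simpa [Matrix.mul_apply, Fin.sum_univ_three, Matrix.one_apply, w20, w21] using o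
  have sZ : Z 2 2 * Z 2 2 = 1 := by
    have o := congrFun (congrFun hZo 2) 2
    simpa [Matrix.mul_apply, Fin.sum_univ_three, Matrix.one_apply, z20, z21] using o
  have hWZ : W * Zᵀ = diagonal ![1, 1, W 2 2 * Z 2 2] := by
    ext i j
    fin_cases i <;> fin_cases j <;>
      simp [Matrix.mul_apply, Fin.sum_univ_three, Matrix.diagonal_apply, z00W, z01W, z10W, z11W,
        z02, z20, z12, z21, w02, w20, w12, w21] <;>
      linarith [o00, o01, o10, o11]
  have hUW : U' * W = U := by rw [hWdef, ← Matrix.mul_assoc, hU'o, Matrix.one_mul]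
  have hVZ : V' * Z = V := by rw [hZdef, ← Matrix.mul_assoc, hV'o, Matrix.one_mul]
  have hUV : U * Vᵀ = U' * (W * Zᵀ) * V'ᵀ := by
    calc U * Vᵀ = (U' * W) * (V' * Z)ᵀ := by rw [hUW, hVZ]
    _ = U' * (W * Zᵀ) * V'ᵀ := by
        rw [Matrix.transpose_mul]; simp only [Matrix.mul_assoc]
  have hdet : (U * Vᵀ).det = (U' * V'ᵀ).det * (W 2 2 * Z 2 2) := by
    rw [hUV, hWZ, Matrix.det_mul, Matrix.det_mul, Matrix.det_mul, Matrix.det_diagonal,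
      Fin.prod_univ_three]
    simp; ring
  set d : ℝ := (U * Vᵀ).det with hd
  set d' : ℝ := (U' * V'ᵀ).det with hd'
  clear_value d d'
  have Mkey : W * diagonal ![1, 1, d] * Zᵀ = diagonal ![1, 1, d'] := by
    clear h key keyW keyZ hWD hWo hWo' hZo hZo' hDs hDD hUV hWZ hUW hVZ
    ext i j
    fin_cases i <;> fin_cases j <;>
      simp [Matrix.mul_apply, Matrix.mul_diagonal, Fin.sum_univ_three, Matrix.diagonal_apply,
        z00W, z01W, z10W, z11W, z02, z20, z12, z21, w02, w20, w12, w21]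
    · linarith [o00]
    · linarith [o01]
    · linarith [o10]
    · linarith [o11]
    · linear_combination (W 2 2 * Z 2 2) * hdet + d' * (Z 2 2 * Z 2 2) * sW + d' * sZ
  unfold svdProj
  rw [← hd, ← hd']
  calc U * diagonal ![1, 1, d] * Vᵀ
      = (U' * W) * diagonal ![1, 1, d] * (V' * Z)ᵀ := by rw [hUW, hVZ]
    _ = U' * (W * diagonal ![1, 1, d] * Zᵀ) * V'ᵀ := by
        rw [Matrix.transpose_mul]; simp only [Matrix.mul_assoc]
    _ = U' * diagonal ![1, 1, d'] * V'ᵀ := by rw [Mkey]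

/-- SE(3)-bi-equivariance of Arun's method. With `(g₁X) i = r₁(X i) + t₁`,
`(g₂Y) i = r₂(Y i) + t₂`, O(3)-SVDs `R(X,Y) = U Σ Vᵀ` and `R(g₁X,g₂Y) = U' Σ V'ᵀ` sharing the
same `Σ = diag(σ₁,σ₂,σ₃)` with `σ₁ ≥ σ₂ > σ₃ ≥ 0`, the outputs `r = Proj(U,V)`,
`t = m(Y) − r·m(X)` and `r' = Proj(U',V')`, `t' = m(g₂Y) − r'·m(g₁X)` of Arun's method
satisfy `r' = r₂ r r₁ᵀ` and `t' = r₂ t − r₂ r r₁ᵀ t₁ + t₂`. -/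
theorem arun_bi_equivariant {N : ℕ} (hN : 1 ≤ N) (X Y : Fin N → Fin 3 → ℝ)
    (r₁ r₂ : Matrix (Fin 3) (Fin 3) ℝ) (t₁ t₂ : Fin 3 → ℝ)
    (hr₁ : IsSO3 r₁) (hr₂ : IsSO3 r₂)
    (U V U' V' : Matrix (Fin 3) (Fin 3) ℝ) (σ₁ σ₂ σ₃ : ℝ)
    (hU : IsOrtho3 U) (hV : IsOrtho3 V) (hU' : IsOrtho3 U') (hV' : IsOrtho3 V')
    (h12 : σ₁ ≥ σ₂) (h23 : σ₂ > σ₃) (h3 : σ₃ ≥ 0)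
    (hA : corrMat X Y = U * diagonal ![σ₁, σ₂, σ₃] * Vᵀ)
    (hA' : corrMat (fun i => r₁.mulVec (X i) + t₁) (fun i => r₂.mulVec (Y i) + t₂)
      = U' * diagonal ![σ₁, σ₂, σ₃] * V'ᵀ) :
    svdProj U' V' = r₂ * svdProj U V * r₁ᵀ ∧
    pcMean (fun i => r₂.mulVec (Y i) + t₂)
        - (svdProj U' V').mulVec (pcMean (fun i => r₁.mulVec (X i) + t₁))
      = r₂.mulVec (pcMean Y - (svdProj U V).mulVec (pcMean X))
        - (r₂ * svdProj U V * r₁ᵀ).mulVec t₁ + t₂ := by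
  classical
  -- rotation part
  have heq : (r₂ * U) * diagonal ![σ₁, σ₂, σ₃] * (r₁ * V)ᵀ = U' * diagonal ![σ₁, σ₂, σ₃] * V'ᵀ := by
    rw [Matrix.transpose_mul]
    calc r₂ * U * diagonal ![σ₁, σ₂, σ₃] * (Vᵀ * r₁ᵀ)
        = r₂ * (U * diagonal ![σ₁, σ₂, σ₃] * Vᵀ) * r₁ᵀ := by simp only [Matrix.mul_assoc]
      _ = U' * diagonal ![σ₁, σ₂, σ₃] * V'ᵀ := by
          rw [← hA, ← corr_transform hN X Y r₁ r₂ t₁ t₂, hA']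
  have hO1 : IsOrtho3 (r₂ * U) := isOrtho3_mul hr₂.1 hU
  have hO2 : IsOrtho3 (r₁ * V) := isOrtho3_mul hr₁.1 hV
  have huniq : svdProj (r₂ * U) (r₁ * V) = svdProj U' V' :=
    svdProj_unique _ _ _ _ hO1 hO2 hU' hV' σ₁ σ₂ σ₃ h12 h23 h3 heq
  have hproj : svdProj (r₂ * U) (r₁ * V) = r₂ * svdProj U V * r₁ᵀ := by
    unfold svdProj
    have hdet2 : ((r₂ * U) * (r₁ * V)ᵀ).det = (U * Vᵀ).det := by
      rw [Matrix.transpose_mul]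
      simp [Matrix.det_mul, Matrix.det_transpose, hr₁.2, hr₂.2, mul_comm, mul_assoc, mul_left_comm]
    rw [hdet2, Matrix.transpose_mul]
    simp only [Matrix.mul_assoc]
  have hrot : svdProj U' V' = r₂ * svdProj U V * r₁ᵀ := huniq ▸ hproj
  refine ⟨hrot, ?_⟩
  rw [pcMean_transform hN X r₁ t₁, pcMean_transform hN Y r₂ t₂, hrot]
  rw [Matrix.mulVec_add, Matrix.mulVec_mulVec, Matrix.mul_assoc (r₂ * svdProj U V) r₁ᵀ r₁,
    hr₁.1, Matrix.mul_one, Matrix.mulVec_sub, Matrix.mulVec_mulVec]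
  abel
end

section
/- (Swap-equivariance of Arun's method, Proposition 1 part 2.) Let N ≥ 1 and X, Y : Fin N → ℝ³ be point clouds. Suppose R(X,Y) = U Σ Vᵀ and R(Y,X) = U' Σ V'ᵀ are O(3)-SVDs with the same Σ = diag(σ₁,σ₂,σ₃), σ₁ ≥ σ₂ > σ₃ ≥ 0. Let r = Proj(U,V), t = m(Y) − r·m(X), and r' = Proj(U',V'), t' = m(X) − r'·m(Y). Then r' = rᵀ and t' = −rᵀ t; i.e. Arun's output on the swapped input is the inverse rigid transformation. -/
open Matrix

lemma ortho_mul_self {U : Matrix (Fin 3) (Fin 3) ℝ} (h : IsOrtho3 U) : U * Uᵀ = 1 := by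
  rw [mul_eq_one_comm]; exact h

lemma aux_zero {a b x : ℝ} (h : a * x = x * b) (hne : a ≠ b) : x = 0 := by
  have h2 : x * (a - b) = 0 := by linear_combination h
  rcases mul_eq_zero.mp h2 with h3 | h3
  · exact h3
  · exact absurd (by linarith [sub_eq_zero.mp h3] : a = b) hne

lemma aux_zero' {a b x : ℝ} (h : a * (a * x) = x * (b * b)) (hne : a * a ≠ b * b) : x = 0 :=
  aux_zero (a := a * a) (b := b * b) (by linear_combination h) hne

lemma aux_cancel {a x y : ℝ} (h : a * x = y * a) (ha : a ≠ 0) : y = x := by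
  have h2 : (y - x) * a = 0 := by linear_combination -h
  rcases mul_eq_zero.mp h2 with h3 | h3
  · linarith [sub_eq_zero.mp h3]
  · exact absurd h3 ha

lemma corrMat_transpose {N : ℕ} (X Y : Fin N → Fin 3 → ℝ) :
    (corrMat X Y)ᵀ = corrMat Y X := by
  unfold corrMat
  ext i j
  simp [Matrix.transpose_apply, Matrix.sum_apply, vecMulVec_apply, mul_comm]

lemma svdProj_transpose (U V : Matrix (Fin 3) (Fin 3) ℝ) :
    (svdProj U V)ᵀ = svdProj V U := by
  unfold svdProj
  have h : V * Uᵀ = (U * Vᵀ)ᵀ := by rw [transpose_mul, transpose_transpose]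
  rw [h, det_transpose, transpose_mul, transpose_mul, transpose_transpose,
    diagonal_transpose, Matrix.mul_assoc]

lemma diag3_sq {e : ℝ} (he : e * e = 1) :
    diagonal ![1, 1, e] * diagonal ![1, 1, e] = (1 : Matrix (Fin 3) (Fin 3) ℝ) := by
  rw [diagonal_mul_diagonal,
    show (fun i => (![1, 1, e] : Fin 3 → ℝ) i * ![1, 1, e] i) = 1 by
      funext i; fin_cases i <;> simp [he]]
  exact diagonal_one

lemma svdProj_orth {U V : Matrix (Fin 3) (Fin 3) ℝ} (hU : IsOrtho3 U) (hV : IsOrtho3 V) :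
    (svdProj U V)ᵀ * svdProj U V = 1 := by
  have hdU : U.det * U.det = 1 := by
    have h := congrArg Matrix.det hU
    rwa [det_mul, det_transpose, det_one] at h
  have hdV : V.det * V.det = 1 := by
    have h := congrArg Matrix.det hV
    rwa [det_mul, det_transpose, det_one] at h
  have he : (U * Vᵀ).det * (U * Vᵀ).det = 1 := by
    rw [det_mul, det_transpose]
    nlinarith [hdU, hdV]
  have cU : ∀ M : Matrix (Fin 3) (Fin 3) ℝ, Uᵀ * (U * M) = M := fun M => by
    rw [← Matrix.mul_assoc, hU, one_mul]
  unfold svdProj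
  rw [transpose_mul, transpose_mul, transpose_transpose, diagonal_transpose]
  simp only [Matrix.mul_assoc]
  rw [cU, ← Matrix.mul_assoc (diagonal ![1, 1, (U * Vᵀ).det]), diag3_sq he, one_mul]
  exact ortho_mul_self hV

set_option maxHeartbeats 1000000 in
lemma svd_proj_unique (P Q P' Q' : Matrix (Fin 3) (Fin 3) ℝ) (σ₁ σ₂ σ₃ : ℝ)
    (hP : IsOrtho3 P) (hQ : IsOrtho3 Q) (hP' : IsOrtho3 P') (hQ' : IsOrtho3 Q')
    (h12 : σ₁ ≥ σ₂) (h23 : σ₂ > σ₃) (h3 : σ₃ ≥ 0)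
    (hEq : P * diagonal ![σ₁, σ₂, σ₃] * Qᵀ = P' * diagonal ![σ₁, σ₂, σ₃] * Q'ᵀ) :
    svdProj P' Q' = svdProj P Q := by
  have hσ2 : (0:ℝ) < σ₂ := lt_of_le_of_lt h3 h23
  have hσ1 : (0:ℝ) < σ₁ := lt_of_lt_of_le hσ2 h12
  set S : Matrix (Fin 3) (Fin 3) ℝ := diagonal ![σ₁, σ₂, σ₃] with hS
  set W : Matrix (Fin 3) (Fin 3) ℝ := Pᵀ * P' with hWdef
  set Z : Matrix (Fin 3) (Fin 3) ℝ := Qᵀ * Q' with hZdef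
  have cP : ∀ M : Matrix (Fin 3) (Fin 3) ℝ, Pᵀ * (P * M) = M := fun M => by
    rw [← Matrix.mul_assoc, hP, one_mul]
  have cP2 : ∀ M : Matrix (Fin 3) (Fin 3) ℝ, P * (Pᵀ * M) = M := fun M => by
    rw [← Matrix.mul_assoc, ortho_mul_self hP, one_mul]
  have cQ : ∀ M : Matrix (Fin 3) (Fin 3) ℝ, Qᵀ * (Q * M) = M := fun M => by
    rw [← Matrix.mul_assoc, hQ, one_mul]
  have cQ2 : ∀ M : Matrix (Fin 3) (Fin 3) ℝ, Q * (Qᵀ * M) = M := fun M => by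
    rw [← Matrix.mul_assoc, ortho_mul_self hQ, one_mul]
  have cP' : ∀ M : Matrix (Fin 3) (Fin 3) ℝ, P'ᵀ * (P' * M) = M := fun M => by
    rw [← Matrix.mul_assoc, hP', one_mul]
  have cQ' : ∀ M : Matrix (Fin 3) (Fin 3) ℝ, Q'ᵀ * (Q' * M) = M := fun M => by
    rw [← Matrix.mul_assoc, hQ', one_mul]
  have cP'2 : ∀ M : Matrix (Fin 3) (Fin 3) ℝ, P' * (P'ᵀ * M) = M := fun M => by
    rw [← Matrix.mul_assoc, ortho_mul_self hP', one_mul]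
  have cQ'2 : ∀ M : Matrix (Fin 3) (Fin 3) ℝ, Q' * (Q'ᵀ * M) = M := fun M => by
    rw [← Matrix.mul_assoc, ortho_mul_self hQ', one_mul]
  have hSym : Sᵀ = S := by rw [hS, Matrix.diagonal_transpose]
  -- S * Z = W * S
  have hSZ : S * Z = W * S := by
    have h := congrArg (fun M : Matrix (Fin 3) (Fin 3) ℝ => Pᵀ * M * Q') hEq
    simp only [Matrix.mul_assoc] at h
    rw [cP, hQ', mul_one] at h
    rw [hZdef, hWdef, h, Matrix.mul_assoc]
  -- S² commutes with W
  have hAAT : P * (S * (S * Pᵀ)) = P' * (S * (S * P'ᵀ)) := by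
    have h := congrArg (fun M : Matrix (Fin 3) (Fin 3) ℝ => M * Mᵀ) hEq
    simp only [Matrix.transpose_mul, Matrix.transpose_transpose, hSym,
      Matrix.mul_assoc] at h
    rw [cQ, cQ'] at h
    exact h
  have hS2W : S * (S * W) = W * (S * S) := by
    have h := congrArg (fun M : Matrix (Fin 3) (Fin 3) ℝ => Pᵀ * M * P') hAAT
    simp only [Matrix.mul_assoc] at h
    rw [cP, hP', mul_one] at h
    rw [hWdef, h, Matrix.mul_assoc]
  -- S² commutes with Z
  have hATA : Q * (S * (S * Qᵀ)) = Q' * (S * (S * Q'ᵀ)) := by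
    have h := congrArg (fun M : Matrix (Fin 3) (Fin 3) ℝ => Mᵀ * M) hEq
    simp only [Matrix.transpose_mul, Matrix.transpose_transpose, hSym,
      Matrix.mul_assoc] at h
    rw [cP, cP'] at h
    exact h
  have hS2Z : S * (S * Z) = Z * (S * S) := by
    have h := congrArg (fun M : Matrix (Fin 3) (Fin 3) ℝ => Qᵀ * M * Q') hATA
    simp only [Matrix.mul_assoc] at h
    rw [cQ, hQ', mul_one] at h
    rw [hZdef, h, Matrix.mul_assoc]
  -- orthogonality of W and Z
  have hZo : Z * Zᵀ = 1 := by
    rw [hZdef, transpose_mul, transpose_transpose, Matrix.mul_assoc, cQ'2]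
    exact hQ
  have hWo : W * Wᵀ = 1 := by
    rw [hWdef, transpose_mul, transpose_transpose, Matrix.mul_assoc, cP'2]
    exact hP
  -- entrywise equations
  have e1 : ∀ i j, (![σ₁, σ₂, σ₃] : Fin 3 → ℝ) i * Z i j = W i j * ![σ₁, σ₂, σ₃] j := by
    intro i j
    have h := congrFun (congrFun hSZ i) j
    rwa [hS, diagonal_mul, mul_diagonal] at h
  have e2 : ∀ i j, (![σ₁, σ₂, σ₃] : Fin 3 → ℝ) i * ((![σ₁, σ₂, σ₃] : Fin 3 → ℝ) i * Z i j)
      = Z i j * ((![σ₁, σ₂, σ₃] : Fin 3 → ℝ) j * (![σ₁, σ₂, σ₃] : Fin 3 → ℝ) j) := by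
    intro i j
    have h := congrFun (congrFun hS2Z i) j
    rwa [hS, diagonal_mul_diagonal, diagonal_mul, diagonal_mul, mul_diagonal] at h
  have e3 : ∀ i j, (![σ₁, σ₂, σ₃] : Fin 3 → ℝ) i * ((![σ₁, σ₂, σ₃] : Fin 3 → ℝ) i * W i j)
      = W i j * ((![σ₁, σ₂, σ₃] : Fin 3 → ℝ) j * (![σ₁, σ₂, σ₃] : Fin 3 → ℝ) j) := by
    intro i j
    have h := congrFun (congrFun hS2W i) j
    rwa [hS, diagonal_mul_diagonal, diagonal_mul, diagonal_mul, mul_diagonal] at h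
  -- vanishing entries
  have h13 : σ₁ * σ₁ ≠ σ₃ * σ₃ := by nlinarith
  have h23' : σ₂ * σ₂ ≠ σ₃ * σ₃ := by nlinarith
  have z02 : Z 0 2 = 0 := aux_zero' (show σ₁ * (σ₁ * Z 0 2) = Z 0 2 * (σ₃ * σ₃) from e2 0 2) h13
  have z12 : Z 1 2 = 0 := aux_zero' (show σ₂ * (σ₂ * Z 1 2) = Z 1 2 * (σ₃ * σ₃) from e2 1 2) h23'
  have z20 : Z 2 0 = 0 := aux_zero' (show σ₃ * (σ₃ * Z 2 0) = Z 2 0 * (σ₁ * σ₁) from e2 2 0) (Ne.symm h13)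
  have z21 : Z 2 1 = 0 := aux_zero' (show σ₃ * (σ₃ * Z 2 1) = Z 2 1 * (σ₂ * σ₂) from e2 2 1) (Ne.symm h23')
  have w02 : W 0 2 = 0 := aux_zero' (show σ₁ * (σ₁ * W 0 2) = W 0 2 * (σ₃ * σ₃) from e3 0 2) h13
  have w12 : W 1 2 = 0 := aux_zero' (show σ₂ * (σ₂ * W 1 2) = W 1 2 * (σ₃ * σ₃) from e3 1 2) h23'
  have w20 : W 2 0 = 0 := aux_zero' (show σ₃ * (σ₃ * W 2 0) = W 2 0 * (σ₁ * σ₁) from e3 2 0) (Ne.symm h13)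
  have w21 : W 2 1 = 0 := aux_zero' (show σ₃ * (σ₃ * W 2 1) = W 2 1 * (σ₂ * σ₂) from e3 2 1) (Ne.symm h23')
  -- block equality
  have t00 : W 0 0 = Z 0 0 :=
    aux_cancel (show σ₁ * Z 0 0 = W 0 0 * σ₁ from e1 0 0) (ne_of_gt hσ1)
  have t11 : W 1 1 = Z 1 1 :=
    aux_cancel (show σ₂ * Z 1 1 = W 1 1 * σ₂ from e1 1 1) (ne_of_gt hσ2)
  have t01 : W 0 1 = Z 0 1 := by
    by_cases hc : σ₁ = σ₂
    · have h := show σ₁ * Z 0 1 = W 0 1 * σ₂ from e1 0 1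
      rw [hc] at h
      exact aux_cancel h (ne_of_gt hσ2)
    · have h12' : σ₁ * σ₁ ≠ σ₂ * σ₂ := by
        intro hh
        exact hc (by nlinarith)
      have hz : Z 0 1 = 0 :=
        aux_zero' (show σ₁ * (σ₁ * Z 0 1) = Z 0 1 * (σ₂ * σ₂) from e2 0 1) h12'
      have hw : W 0 1 = 0 :=
        aux_zero' (show σ₁ * (σ₁ * W 0 1) = W 0 1 * (σ₂ * σ₂) from e3 0 1) h12'
      rw [hz, hw]
  have t10 : W 1 0 = Z 1 0 := by
    by_cases hc : σ₁ = σ₂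
    · have h := show σ₂ * Z 1 0 = W 1 0 * σ₁ from e1 1 0
      rw [hc] at h
      exact aux_cancel h (ne_of_gt hσ2)
    · have h12' : σ₂ * σ₂ ≠ σ₁ * σ₁ := by
        intro hh
        exact hc (by nlinarith)
      have hz : Z 1 0 = 0 :=
        aux_zero' (show σ₂ * (σ₂ * Z 1 0) = Z 1 0 * (σ₁ * σ₁) from e2 1 0) h12'
      have hw : W 1 0 = 0 :=
        aux_zero' (show σ₂ * (σ₂ * W 1 0) = W 1 0 * (σ₁ * σ₁) from e3 1 0) h12'
      rw [hz, hw]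
  -- row relations
  have hr1 : Z 0 0 * Z 0 0 + Z 0 1 * Z 0 1 = 1 := by
    have h := congrFun (congrFun hZo 0) 0
    simp [Matrix.mul_apply, Fin.sum_univ_three, Matrix.one_apply, z02] at h
    linarith [h]
  have hr12 : Z 0 0 * Z 1 0 + Z 0 1 * Z 1 1 = 0 := by
    have h := congrFun (congrFun hZo 0) 1
    simp [Matrix.mul_apply, Fin.sum_univ_three, Matrix.one_apply, z02, z12] at h
    linarith [h]
  have hr2 : Z 1 0 * Z 1 0 + Z 1 1 * Z 1 1 = 1 := by
    have h := congrFun (congrFun hZo 1) 1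
    simp [Matrix.mul_apply, Fin.sum_univ_three, Matrix.one_apply, z12] at h
    linarith [h]
  have hrε : Z 2 2 * Z 2 2 = 1 := by
    have h := congrFun (congrFun hZo 2) 2
    simp [Matrix.mul_apply, Fin.sum_univ_three, Matrix.one_apply, z20, z21] at h
    linarith [h]
  have hrδ : W 2 2 * W 2 2 = 1 := by
    have h := congrFun (congrFun hWo 2) 2
    simp [Matrix.mul_apply, Fin.sum_univ_three, Matrix.one_apply, w20, w21] at h
    linarith [h]
  have hD2 : (Z 0 0 * Z 1 1 - Z 0 1 * Z 1 0) ^ 2 = 1 := by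
    linear_combination (Z 1 0 * Z 1 0 + Z 1 1 * Z 1 1) * hr1 + hr2
      - (Z 0 0 * Z 1 0 + Z 0 1 * Z 1 1) * hr12
  -- P' = P * W, Q' = Q * Z
  have hP'e : P' = P * W := by rw [hWdef]; exact (cP2 P').symm
  have hQ'e : Q' = Q * Z := by rw [hZdef]; exact (cQ2 Q').symm
  -- determinants
  have hdetW : W.det = (Z 0 0 * Z 1 1 - Z 0 1 * Z 1 0) * W 2 2 := by
    rw [Matrix.det_fin_three, w02, w12, w20, w21, t00, t01, t10, t11]
    ring
  have hdetZ : Z.det = (Z 0 0 * Z 1 1 - Z 0 1 * Z 1 0) * Z 2 2 := by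
    rw [Matrix.det_fin_three, z02, z12, z20, z21]
    ring
  have hdet' : (P' * Q'ᵀ).det = (P * Qᵀ).det * (W.det * Z.det) := by
    rw [hP'e, hQ'e, transpose_mul]
    simp [det_mul, det_transpose]
    ring
  -- the key identity
  set k : ℝ := (P * Qᵀ).det with hk
  have key : W * diagonal ![1, 1, k * (W.det * Z.det)] * Zᵀ
      = diagonal ![1, 1, k] := by
    ext i j
    fin_cases i <;> fin_cases j <;>
      simp [Matrix.mul_apply, Fin.sum_univ_three, Matrix.diagonal, Matrix.transpose_apply,
        z02, z12, z20, z21, w02, w12, w20, w21, t00, t01, t10, t11, hdetW, hdetZ]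
    · linarith [hr1]
    · linarith [hr12]
    · linarith [hr12]
    · linarith [hr2]
    · linear_combination (k * ((Z 0 0 * Z 1 1 - Z 0 1 * Z 1 0) ^ 2)
          * (Z 2 2 * Z 2 2)) * hrδ
        + (k * ((Z 0 0 * Z 1 1 - Z 0 1 * Z 1 0) ^ 2)) * hrε
        + k * hD2
  -- conclude
  unfold svdProj
  rw [hdet', hP'e, hQ'e, transpose_mul]
  simp only [← Matrix.mul_assoc]
  calc P * W * diagonal ![1, 1, k * (W.det * Z.det)] * Zᵀ * Qᵀ
      = P * (W * diagonal ![1, 1, k * (W.det * Z.det)] * Zᵀ) * Qᵀ := by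
        simp only [Matrix.mul_assoc]
    _ = P * diagonal ![1, 1, k] * Qᵀ := by rw [key]

/-- Swap-equivariance of Arun's method. With O(3)-SVDs
`R(X,Y) = U Σ Vᵀ` and `R(Y,X) = U' Σ V'ᵀ` sharing the same `Σ = diag(σ₁,σ₂,σ₃)`,
`σ₁ ≥ σ₂ > σ₃ ≥ 0`, the outputs `r = Proj(U,V)`, `t = m(Y) − r·m(X)` and
`r' = Proj(U',V')`, `t' = m(X) − r'·m(Y)` satisfy `r' = rᵀ` and `t' = −rᵀ t`. -/
theorem arun_swap_equivariant {N : ℕ} (hN : 1 ≤ N) (X Y : Fin N → Fin 3 → ℝ)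
    (U V U' V' : Matrix (Fin 3) (Fin 3) ℝ) (σ₁ σ₂ σ₃ : ℝ)
    (hU : IsOrtho3 U) (hV : IsOrtho3 V) (hU' : IsOrtho3 U') (hV' : IsOrtho3 V')
    (h12 : σ₁ ≥ σ₂) (h23 : σ₂ > σ₃) (h3 : σ₃ ≥ 0)
    (hA : corrMat X Y = U * diagonal ![σ₁, σ₂, σ₃] * Vᵀ)
    (hA' : corrMat Y X = U' * diagonal ![σ₁, σ₂, σ₃] * V'ᵀ) :
    svdProj U' V' = (svdProj U V)ᵀ ∧
    pcMean X - (svdProj U' V').mulVec (pcMean Y)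
      = -(svdProj U V)ᵀ.mulVec (pcMean Y - (svdProj U V).mulVec (pcMean X)) := by
  have hT : V * diagonal ![σ₁, σ₂, σ₃] * Uᵀ = U' * diagonal ![σ₁, σ₂, σ₃] * V'ᵀ := by
    rw [← hA', ← corrMat_transpose X Y, hA, transpose_mul, transpose_mul,
      transpose_transpose, diagonal_transpose, Matrix.mul_assoc]
  have h1 : svdProj U' V' = svdProj V U :=
    svd_proj_unique V U U' V' σ₁ σ₂ σ₃ hV hU hU' hV' h12 h23 h3 hT
  have h2 : svdProj U' V' = (svdProj U V)ᵀ := by rw [h1, svdProj_transpose]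
  refine ⟨h2, ?_⟩
  rw [h2, Matrix.mulVec_sub, Matrix.mulVec_mulVec, svdProj_orth hU hV, Matrix.one_mulVec,
    neg_sub]
end
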